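/- Let f : ℕ → ℝ be such that Δf(n) → ψ as n → ∞ for some integer ψ ∈ ℤ. Then the sequence of exponential sums { ∑_{n=1}^{N} e(f(n)) : N ≥ 1 } is unbounded. -/

import Mathlib

/-!
Since `e` has period `1` and `Δf(n) → ψ ∈ ℤ`, consecutive terms satisfy `e(f(n+1)) - e(f(n)) → 0`.
Hence, for a fixed window length `K`, the `K` terms following a large `n` are all close to
`e(f(n))`, so their sum has norm close to `K`. But that sum is a difference of two partial sums,
so it is at most `2M` when the partial sums are bounded by `M`; taking `K > 2M` is absurd.
-/

open Filter

/-- `e(x) = e^{2πix}`. -/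
noncomputable def e (x : ℝ) : ℂ := Complex.exp (2 * Real.pi * Complex.I * x)

open Finset Topology

section WindowSums

variable {E : Type*} [NormedAddCommGroup E]

theorem tendsto_sub_of_tendsto_sub_succ {a : ℕ → E}
    (h : Tendsto (fun n ↦ a (n + 1) - a n) atTop (𝓝 0)) (j : ℕ) :
    Tendsto (fun n ↦ a (n + j) - a n) atTop (𝓝 0) := by
  induction j with
  | zero => simp
  | succ j ih =>
    have hstep := h.comp (tendsto_add_atTop_nat j)
    simpa [Function.comp_def, add_assoc] using hstep.add ih

theorem tendsto_sum_range_sub_nsmul {a : ℕ → E}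
    (h : Tendsto (fun n ↦ a (n + 1) - a n) atTop (𝓝 0)) (K : ℕ) :
    Tendsto (fun n ↦ ∑ i ∈ range K, a (n + i) - K • a n) atTop (𝓝 0) := by
  simpa [sum_sub_distrib] using
    tendsto_finsetSum (range K) fun i _ ↦ tendsto_sub_of_tendsto_sub_succ h i

theorem not_eventually_norm_le_of_tendsto_sub_sub [NormedSpace ℝ E] (S : ℕ → E) {δ : ℝ}
    (hδ : 0 < δ) (hΔ : ∀ n, δ ≤ ‖S (n + 1) - S n‖)
    (hΔ2 : Tendsto (fun n ↦ (S (n + 1 + 1) - S (n + 1)) - (S (n + 1) - S n)) atTop (𝓝 0)) :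
    ¬ ∃ M, ∀ᶠ N in atTop, ‖S N‖ ≤ M := by
  rintro ⟨M, hM⟩
  obtain ⟨K, hK⟩ := exists_nat_gt ((2 * M + 1) / δ)
  set a : ℕ → E := fun n ↦ S (n + 1) - S n
  have hwindow : ∀ n, ∑ i ∈ range K, a (n + i) = S (n + K) - S n :=
    fun n ↦ sum_range_sub (fun i ↦ S (n + i)) K
  have hclose : ∀ᶠ n in atTop, ‖∑ i ∈ range K, a (n + i) - K • a n‖ < 1 :=
    (tendsto_zero_iff_norm_tendsto_zero.1 (tendsto_sum_range_sub_nsmul hΔ2 K)).eventually_lt_const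
      one_pos
  obtain ⟨n, hn, hSn, hSnK⟩ :=
    (hclose.and (hM.and ((tendsto_add_atTop_nat K).eventually hM))).exists
  have hKδ : 2 * M + 1 < K * δ := (div_lt_iff₀ hδ).1 hK
  refine hKδ.not_gt ?_
  calc
    K * δ ≤ ‖K • a n‖ := by
      rw [RCLike.norm_nsmul ℝ, nsmul_eq_mul]; exact mul_le_mul_of_nonneg_left (hΔ n) K.cast_nonneg
    _ ≤ ‖∑ i ∈ range K, a (n + i)‖ + ‖∑ i ∈ range K, a (n + i) - K • a n‖ :=
      norm_le_norm_add_norm_sub _ _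
    _ ≤ ‖S (n + K)‖ + ‖S n‖ + ‖∑ i ∈ range K, a (n + i) - K • a n‖ := by
      rw [hwindow]; gcongr; exact norm_sub_le _ _
    _ < 2 * M + 1 := by linarith

end WindowSums

theorem norm_e (x : ℝ) : ‖e x‖ = 1 := by
  rw [e, Complex.norm_exp]
  simp

theorem e_add (x y : ℝ) : e (x + y) = e x * e y := by
  rw [e, e, e, ← Complex.exp_add]
  push_cast
  ring_nf

theorem e_intCast (m : ℤ) : e m = 1 := by
  rw [e, ← Complex.exp_int_mul_two_pi_mul_I m]
  push_cast
  ring_nf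

theorem continuous_e : Continuous e := by
  unfold e
  fun_prop

theorem tendsto_e_sub_e_of_tendsto_sub_intCast {f : ℕ → ℝ} {ψ : ℤ}
    (h : Tendsto (fun n ↦ f (n + 1) - f n) atTop (𝓝 (ψ : ℝ))) :
    Tendsto (fun n ↦ e (f (n + 1)) - e (f n)) atTop (𝓝 0) := by
  have hfactor : ∀ n, e (f (n + 1)) - e (f n) = e (f n) * (e (f (n + 1) - f n) - 1) := fun n ↦ by
    rw [mul_sub, ← e_add, add_sub_cancel, mul_one]
  have hlim : Tendsto (fun n ↦ e (f (n + 1) - f n) - 1) atTop (𝓝 0) := by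
    simpa [e_intCast] using ((continuous_e.tendsto _).comp h).sub_const 1
  rw [tendsto_zero_iff_norm_tendsto_zero] at hlim ⊢
  simpa [hfactor, norm_e] using hlim

/-- if `Δf(n) → ψ` for some integer `ψ`, then the exponential sums
`∑_{n=1}^{N} e(f(n))` are unbounded. -/
theorem stmt_6 (f : ℕ → ℝ) (ψ : ℤ)
    (h : Tendsto (fun n : ℕ => f (n + 1) - f n) atTop (nhds (ψ : ℝ))) :
    ¬ ∃ M : ℝ, ∀ N : ℕ, 1 ≤ N →
      ‖∑ n ∈ Finset.Icc 1 N, e (f n)‖ ≤ M := by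
  rintro ⟨M, hM⟩
  refine not_eventually_norm_le_of_tendsto_sub_sub (fun N ↦ ∑ n ∈ Icc 1 N, e (f n)) one_pos
    (fun n ↦ ?_) ?_ ⟨M, eventually_atTop.2 ⟨1, hM⟩⟩
  · simp [sum_Icc_succ_top, norm_e]
  · simpa [sum_Icc_succ_top, Function.comp_def] using
      (tendsto_e_sub_e_of_tendsto_sub_intCast h).comp (tendsto_add_atTop_nat 1)
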